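/- An ideal I on κ is normal if and only if I is pleasant and the set of limit ordinals below κ belongs to the dual filter I*. -/

import Mathlib

open Set

namespace PaperIdeals

/-- Diagonal union of a family `X` indexed by a set `A` of ordinals. -/
def diagU (A : Set Ordinal.{0}) (X : Ordinal.{0} → Set Ordinal.{0}) : Set Ordinal.{0} :=
  {ξ | ∃ α < ξ, α ∈ A ∧ ξ ∈ X α}

/-- `X` is bounded below `κ`. -/
def BddIn (κ : Cardinal.{0}) (X : Set Ordinal.{0}) : Prop := ∃ θ < κ.ord, X ⊆ Iio θ

/-- `J` is a `<κ`-complete ideal on `κ` containing all singletons,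
closed under subsets and (finite and small) unions. -/
def IsIdeal (κ : Cardinal.{0}) (J : Set Ordinal.{0} → Prop) : Prop :=
  (∀ X, J X → X ⊆ Iio κ.ord) ∧
  (∀ X Y, J X → Y ⊆ X → J Y) ∧
  (∀ X Y, J X → J Y → J (X ∪ Y)) ∧
  (∀ ξ < κ.ord, J {ξ}) ∧
  (∀ θ : Ordinal.{0}, θ.card < κ → ∀ X : Ordinal.{0} → Set Ordinal.{0},
    (∀ α, J (X α)) → J (⋃ α ∈ Iio θ, X α))

def Proper (κ : Cardinal.{0}) (J : Set Ordinal.{0} → Prop) : Prop := ¬ J (Iio κ.ord)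

/-- The coideal `I⁺`. -/
def Pos (κ : Cardinal.{0}) (J : Set Ordinal.{0} → Prop) (X : Set Ordinal.{0}) : Prop :=
  X ⊆ Iio κ.ord ∧ ¬ J X

/-- The dual filter `I*`. -/
def Dual (κ : Cardinal.{0}) (J : Set Ordinal.{0} → Prop) (X : Set Ordinal.{0}) : Prop :=
  X ⊆ Iio κ.ord ∧ J (Iio κ.ord \ X)

/-- The restriction `I ↾ A`. -/
def restrict (κ : Cardinal.{0}) (J : Set Ordinal.{0} → Prop) (A : Set Ordinal.{0})
    (X : Set Ordinal.{0}) : Prop :=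
  X ⊆ Iio κ.ord ∧ J (X ∩ A)

/-- Pleasant: closed under diagonal unions indexed by sets in the ideal. -/
def Pleasant (J : Set Ordinal.{0} → Prop) : Prop :=
  ∀ A, J A → ∀ X : Ordinal.{0} → Set Ordinal.{0}, (∀ α, J (X α)) → J (diagU A X)

/-- Prepleasant: closed under diagonal unions of bounded sets indexed by sets in the ideal. -/
def Prepleasant (κ : Cardinal.{0}) (J : Set Ordinal.{0} → Prop) : Prop :=
  ∀ Q, J Q → ∀ B : Ordinal.{0} → Set Ordinal.{0}, (∀ α, BddIn κ (B α)) → J (diagU Q B)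

/-- Normal: closed under full `κ`-indexed diagonal unions. -/
def Normal (κ : Cardinal.{0}) (J : Set Ordinal.{0} → Prop) : Prop :=
  ∀ X : Ordinal.{0} → Set Ordinal.{0}, (∀ α, J (X α)) → J (diagU (Iio κ.ord) X)

/-- Quasinormal ideal. -/
def Quasinormal (κ : Cardinal.{0}) (J : Set Ordinal.{0} → Prop) : Prop :=
  ∀ X : Ordinal.{0} → Set Ordinal.{0}, (∀ α, J (X α)) →
    ∃ Q, Dual κ J Q ∧ J (diagU Q X)

/-- Club subset of `κ`: unbounded in `κ.ord` and closed under limits. -/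
def IsClubIn (κ : Cardinal.{0}) (C : Set Ordinal.{0}) : Prop :=
  C ⊆ Iio κ.ord ∧ (∀ α < κ.ord, ∃ β ∈ C, α < β) ∧
  (∀ δ < κ.ord, Order.IsSuccLimit δ → (∀ α < δ, ∃ β ∈ C, α < β ∧ β < δ) → δ ∈ C)

/-- Stationary subset of `κ`. -/
def StatIn (κ : Cardinal.{0}) (S : Set Ordinal.{0}) : Prop :=
  S ⊆ Iio κ.ord ∧ ∀ C, IsClubIn κ C → (S ∩ C).Nonempty

/-- The nonstationary ideal `NS κ`. -/
def NS (κ : Cardinal.{0}) (X : Set Ordinal.{0}) : Prop :=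
  X ⊆ Iio κ.ord ∧ ∃ C, IsClubIn κ C ∧ X ∩ C = ∅

/-- Membership in the ideal generated by a family `S`. -/
def genIdeal (κ : Cardinal.{0}) (S : Set Ordinal.{0} → Prop) (X : Set Ordinal.{0}) : Prop :=
  ∀ K, IsIdeal κ K → (∀ Y, S Y → K Y) → K X

/-- Membership in the pleasant closure of `S` (smallest pleasant ideal containing `S`). -/
def PClosure (κ : Cardinal.{0}) (S : Set Ordinal.{0} → Prop) (X : Set Ordinal.{0}) : Prop :=
  ∀ K, IsIdeal κ K → Pleasant K → (∀ Y, S Y → K Y) → K X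

/-- Membership in the prepleasant closure of `S`. -/
def PPClosure (κ : Cardinal.{0}) (S : Set Ordinal.{0} → Prop) (X : Set Ordinal.{0}) : Prop :=
  ∀ K, IsIdeal κ K → Prepleasant κ K → (∀ Y, S Y → K Y) → K X

/-- p-point. -/
def PPoint (κ : Cardinal.{0}) (J : Set Ordinal.{0} → Prop) : Prop :=
  ∀ f : Ordinal.{0} → Ordinal.{0}, (∀ ξ : Ordinal.{0}, J {α | α < κ.ord ∧ f α = ξ}) →
    ∃ X, Dual κ J X ∧ ∀ ξ : Ordinal.{0}, BddIn κ {α | α ∈ X ∧ f α = ξ}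

/-- q-point. -/
def QPoint (κ : Cardinal.{0}) (J : Set Ordinal.{0} → Prop) : Prop :=
  ∀ f : Ordinal.{0} → Ordinal.{0}, (∀ ξ : Ordinal.{0}, BddIn κ {α | α < κ.ord ∧ f α = ξ}) →
    ∃ X, Dual κ J X ∧ Set.InjOn f X

/-- `L = {λ + 1 : λ < κ a limit ordinal}`. -/
def LSet (κ : Cardinal.{0}) : Set Ordinal.{0} :=
  {x | ∃ lam : Ordinal.{0}, Order.IsSuccLimit lam ∧ x = lam + 1 ∧ x < κ.ord}

/-- `B(Y) = {α - 1 : α ∈ Y}` for a set `Y` of successor ordinals. -/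
def BSet (Y : Set Ordinal.{0}) : Set Ordinal.{0} := {γ | γ + 1 ∈ Y}

/-- `W = {λ < κ : cof λ = ω}`. -/
def WSet (κ : Cardinal.{0}) : Set Ordinal.{0} :=
  {lam | lam < κ.ord ∧ lam.cof = Cardinal.aleph0}

/-- Węglorz's ideal `J_κ`. -/
def Weglorz (κ : Cardinal.{0}) (X : Set Ordinal.{0}) : Prop :=
  X ⊆ Iio κ.ord ∧ ∃ (f : Ordinal.{0} → Ordinal.{0}) (θ : Cardinal.{0}), θ < κ ∧
    (∀ α ∈ X, α ≠ 0 → f α < α) ∧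
    ∀ ξ : Ordinal.{0}, Cardinal.mk {α : Ordinal.{0} // α ∈ X ∧ f α = ξ} ≤ Cardinal.lift.{1} θ

theorem diagU_mono_left {A B : Set Ordinal.{0}} (h : A ⊆ B) (X : Ordinal.{0} → Set Ordinal.{0}) :
    diagU A X ⊆ diagU B X :=
  fun _ ⟨α, hαξ, hα, hξ⟩ => ⟨α, hαξ, h hα, hξ⟩

def nonLimits (o : Ordinal.{0}) : Set Ordinal.{0} :=
  Iio o \ {α | α < o ∧ Order.IsSuccLimit α}

theorem mem_nonLimits {o α : Ordinal.{0}} :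
    α ∈ nonLimits o ↔ α < o ∧ ¬ Order.IsSuccLimit α := by
  simp +contextual [nonLimits]

theorem add_one_mem_nonLimits {o α : Ordinal.{0}} (h : α + 1 < o) : α + 1 ∈ nonLimits o :=
  mem_nonLimits.2 ⟨h, Order.succ_eq_add_one α ▸ Order.not_isSuccLimit_succ α⟩

theorem nonLimits_subset_insert_zero (o : Ordinal.{0}) :
    nonLimits o ⊆ insert 0 (diagU (Iio o) (fun α => {α + 1} ∩ Iio o)) := by
  intro ξ hξ
  obtain ⟨hξo, hlim⟩ := mem_nonLimits.1 hξ
  rcases Ordinal.zero_or_succ_or_isSuccLimit ξ with rfl | ⟨α, rfl⟩ | hξlim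
  · exact mem_insert _ _
  · rw [Order.succ_eq_add_one] at hξo ⊢
    exact Or.inr ⟨α, lt_add_one α, (lt_add_one α).trans hξo, rfl, hξo⟩
  · exact absurd hξlim hlim

/-- A point `ξ ∈ X α` with `α` a limit lies either at the successor `α + 1`, which is not a
limit, or above it, where it is caught by `X (pred (α + 1)) = X α`. -/
theorem diagU_Iio_subset (o : Ordinal.{0}) (X : Ordinal.{0} → Set Ordinal.{0})
    (hX : ∀ α, X α ⊆ Iio o) :
    diagU (Iio o) X ⊆ nonLimits o ∪ diagU (nonLimits o) (fun β => X β ∪ X (Ordinal.pred β)) := by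
  rintro ξ ⟨α, hαξ, hαo, hξ⟩
  have hξo : ξ < o := hX α hξ
  by_cases hα : Order.IsSuccLimit α
  · rcases (Order.add_one_le_of_lt hαξ).eq_or_lt with rfl | hlt
    · exact Or.inl (add_one_mem_nonLimits hξo)
    · refine Or.inr ⟨α + 1, hlt, add_one_mem_nonLimits (hlt.trans hξo), Or.inr ?_⟩
      rwa [Ordinal.pred_add_one]
  · exact Or.inr ⟨α, hαξ, mem_nonLimits.2 ⟨hαo, hα⟩, Or.inl hξ⟩

section

variable {κ : Cardinal.{0}} {J : Set Ordinal.{0} → Prop}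

theorem dual_limits_iff :
    Dual κ J {α | α < κ.ord ∧ Order.IsSuccLimit α} ↔ J (nonLimits κ.ord) :=
  ⟨And.right, fun h => ⟨fun _ hα => hα.1, h⟩⟩

theorem IsIdeal.singleton_inter_Iio (hJ : IsIdeal κ J) (hκ : κ ≠ 0) (ξ : Ordinal.{0}) :
    J ({ξ} ∩ Iio κ.ord) := by
  obtain ⟨-, hmono, -, hsing, -⟩ := hJ
  by_cases hξ : ξ < κ.ord
  · exact hmono _ _ (hsing ξ hξ) inter_subset_left
  · have hempty : {ξ} ∩ Iio κ.ord = ∅ := by simpa using hξ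
    rw [hempty]
    exact hmono _ _ (hsing 0 (Cardinal.ord_pos.2 (pos_iff_ne_zero.2 hκ))) (empty_subset _)

theorem Normal.pleasant (hJ : IsIdeal κ J) (hN : Normal κ J) : Pleasant J :=
  fun A hA X hX => hJ.2.1 _ _ (hN X hX) (diagU_mono_left (hJ.1 A hA) X)

theorem Normal.nonLimits_mem (hJ : IsIdeal κ J) (hκ : κ ≠ 0) (hN : Normal κ J) :
    J (nonLimits κ.ord) := by
  have hsucc := hN (fun α => {α + 1} ∩ Iio κ.ord) fun α => hJ.singleton_inter_Iio hκ (α + 1)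
  refine hJ.2.1 _ _ ?_ (nonLimits_subset_insert_zero κ.ord)
  rw [insert_eq]
  exact hJ.2.2.1 _ _ (hJ.2.2.2.1 0 (Cardinal.ord_pos.2 (pos_iff_ne_zero.2 hκ))) hsucc

theorem Pleasant.normal (hJ : IsIdeal κ J) (hP : Pleasant J) (hL : J (nonLimits κ.ord)) :
    Normal κ J := by
  obtain ⟨hsub, hmono, hunion, -, -⟩ := hJ
  intro X hX
  refine hmono _ _ ?_ (diagU_Iio_subset κ.ord X fun α => hsub _ (hX α))
  exact hunion _ _ hL (hP _ hL _ fun β => hunion _ _ (hX β) (hX _))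

end

theorem stmt14_general (κ : Cardinal.{0}) (hunc : Cardinal.aleph0 < κ)
    (J : Set Ordinal.{0} → Prop) (hJ : IsIdeal κ J) :
    Normal κ J ↔ (Pleasant J ∧ Dual κ J {α | α < κ.ord ∧ Order.IsSuccLimit α}) := by
  have hκ : κ ≠ 0 := (Cardinal.aleph0_pos.trans hunc).ne'
  rw [dual_limits_iff]
  exact ⟨fun hN => ⟨hN.pleasant hJ, hN.nonLimits_mem hJ hκ⟩, fun ⟨hP, hL⟩ => hP.normal hJ hL⟩

/-- `I` is normal iff `I` is pleasant and the set of limit ordinals below `κ`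
is in the dual filter `I*`. -/
theorem stmt14 (κ : Cardinal.{0}) (hreg : κ.IsRegular) (hunc : Cardinal.aleph0 < κ)
    (J : Set Ordinal.{0} → Prop) (hJ : IsIdeal κ J) (hprop : Proper κ J) :
    Normal κ J ↔ (Pleasant J ∧ Dual κ J {α | α < κ.ord ∧ Order.IsSuccLimit α}) :=
  stmt14_general κ hunc J hJ

end PaperIdeals
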